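/- arXiv:2310.13576 — 2 statements merged into one kernel-verified Lean document; each statement's English description precedes it below -/
import Mathlib

section
/- Let G be a directed acyclic graph and let G' = G ∪ {(i,j)} be acyclic. Suppose (x,y) is not an edge of G', adding (x,y) to G does not create a cycle in G, x is not a descendant of j in G', and y is not an ancestor of i in G'. Then adding (x,y) to G' does not create a cycle. -/
def addEdge {V : Type*} (E : V → V → Prop) (i j : V) : V → V → Prop :=
  fun a b => E a b ∨ (a = i ∧ b = j)

def Acyclic {V : Type*} (E : V → V → Prop) : Prop :=
  ∀ v, ¬ Relation.TransGen E v v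

/-! A cycle in `G' ∪ {(x,y)}` must use the edge `(x,y)`, so `y` reaches `x` in `G'`. Such a path
either avoids `(i,j)`, and then closes a cycle in `G ∪ {(x,y)}`, or passes through `i`, making `y`
an ancestor of `i`. -/

section AddEdge

variable {V : Type*} {F : V → V → Prop} {a b u v : V}

theorem Relation.ReflTransGen.addEdge (h : Relation.ReflTransGen F u v) :
    Relation.ReflTransGen (addEdge F a b) u v :=
  Relation.ReflTransGen.mono (fun _ _ => Or.inl) _ _ h

theorem reflTransGen_addEdge_cases (h : Relation.ReflTransGen (addEdge F a b) u v) :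
    Relation.ReflTransGen F u v ∨
      (Relation.ReflTransGen F u a ∧ Relation.ReflTransGen F b v) := by
  induction h using Relation.ReflTransGen.head_induction_on with
  | refl => exact Or.inl .refl
  | head e _ ih =>
    rcases e with e | ⟨rfl, rfl⟩
    · rcases ih with h | ⟨hua, hbv⟩
      · exact Or.inl (.head e h)
      · exact Or.inr ⟨.head e hua, hbv⟩
    · exact Or.inr ⟨.refl, ih.elim id And.right⟩

theorem transGen_addEdge_cases (h : Relation.TransGen (addEdge F a b) u v) :
    Relation.TransGen F u v ∨
      (Relation.ReflTransGen F u a ∧ Relation.ReflTransGen F b v) := by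
  obtain ⟨w, e, hwv⟩ := Relation.TransGen.head'_iff.1 h
  rcases e with e | ⟨rfl, rfl⟩
  · rcases reflTransGen_addEdge_cases hwv with hwv | ⟨hwa, hbv⟩
    · exact Or.inl (.head' e hwv)
    · exact Or.inr ⟨.head e hwa, hbv⟩
  · exact Or.inr ⟨.refl, (reflTransGen_addEdge_cases hwv).elim id And.right⟩

theorem Acyclic.addEdge (hF : Acyclic F) (hba : ¬ Relation.ReflTransGen F b a) :
    Acyclic (addEdge F a b) := by
  intro v hv
  rcases transGen_addEdge_cases hv with hv | ⟨hva, hbv⟩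
  · exact hF v hv
  · exact hba (hbv.trans hva)

theorem not_reflTransGen_of_acyclic_addEdge (h : Acyclic (addEdge F a b)) :
    ¬ Relation.ReflTransGen F b a := fun hba =>
  h a (.head' (Or.inr ⟨rfl, rfl⟩) hba.addEdge)

end AddEdge

theorem sufficiency_general {V : Type*} (E : V → V → Prop) (i j x y : V)
    (hG' : Acyclic (addEdge E i j))
    (hnotCycG : Acyclic (addEdge E x y))
    (hnanc : ¬ Relation.ReflTransGen (addEdge E i j) y i) :
    Acyclic (addEdge (addEdge E i j) x y) := by
  refine hG'.addEdge fun hyx => ?_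
  rcases reflTransGen_addEdge_cases hyx with hyx | ⟨hyi, -⟩
  · exact not_reflTransGen_of_acyclic_addEdge hnotCycG hyx
  · exact hnanc hyi.addEdge

theorem sufficiency {V : Type*} (E : V → V → Prop) (i j x y : V)
    (hG : Acyclic E) (hij : ¬ E i j)
    (hG' : Acyclic (addEdge E i j))
    (hxy : ¬ addEdge E i j x y)
    (hnotCycG : Acyclic (addEdge E x y))
    (hndesc : ¬ Relation.ReflTransGen (addEdge E i j) j x)
    (hnanc : ¬ Relation.ReflTransGen (addEdge E i j) y i) :
    Acyclic (addEdge (addEdge E i j) x y) :=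
  sufficiency_general E i j x y hG' hnotCycG hnanc
end

section
/- Theorem 1 (full characterization): Let G_τ be a DAG with edge set E_τ, and let C_τ be the set of candidate edges (pairs not in E_τ) whose addition to G_τ creates a cycle. Suppose edge (i,j) ∉ C_τ is added, giving E_{τ+1} = E_τ ∪ {(i,j)}. Then the set C_{τ+1} of candidate edges (pairs not in E_{τ+1}) whose addition to G_{τ+1} creates a cycle equals C_τ ∪ Φ_{i,j}, where Φ_{i,j} = {(x,y) ∉ E_{τ+1} : x is a descendant of j in G_{τ+1} and y is an ancestor of i in G_{τ+1}}. -/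
open Relation

section

variable {V : Type*} {E F : V → V → Prop} {i j a b : V}

theorem le_addEdge (E : V → V → Prop) (i j : V) : E ≤ addEdge E i j :=
  fun _ _ => Or.inl

theorem addEdge_self (E : V → V → Prop) (i j : V) : addEdge E i j i j :=
  Or.inr ⟨rfl, rfl⟩

theorem Acyclic.mono (hEF : E ≤ F) (hF : Acyclic F) : Acyclic E :=
  fun v hv => hF v (TransGen.mono hEF _ _ hv)

theorem transGen_addEdge (h : TransGen (addEdge E i j) a b) :
    TransGen E a b ∨ (ReflTransGen E a i ∧ ReflTransGen E j b) := by
  induction h with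
  | single h =>
    rcases h with h | ⟨rfl, rfl⟩
    · exact .inl (.single h)
    · exact .inr ⟨.refl, .refl⟩
  | tail _ hbc ih =>
    rcases hbc, ih with ⟨h | ⟨rfl, rfl⟩, h₁ | ⟨h₁, h₂⟩⟩
    · exact .inl (h₁.tail h)
    · exact .inr ⟨h₁, h₂.tail h⟩
    · exact .inr ⟨h₁.to_reflTransGen, .refl⟩
    · exact .inr ⟨h₁, .refl⟩

theorem reflTransGen_addEdge_iff :
    ReflTransGen (addEdge E i j) a b ↔
      ReflTransGen E a b ∨ (ReflTransGen E a i ∧ ReflTransGen E j b) := by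
  refine ⟨fun h => ?_, ?_⟩
  · rcases reflTransGen_iff_eq_or_transGen.mp h with rfl | h
    · exact .inl .refl
    · exact (transGen_addEdge h).imp_left TransGen.to_reflTransGen
  · rintro (h | ⟨hai, hjb⟩)
    · exact ReflTransGen.mono (le_addEdge E i j) _ _ h
    · exact (ReflTransGen.mono (le_addEdge E i j) _ _ hai).trans
        (.head (addEdge_self E i j) (ReflTransGen.mono (le_addEdge E i j) _ _ hjb))

theorem not_acyclic_addEdge_iff (hE : Acyclic E) :
    ¬ Acyclic (addEdge E a b) ↔ ReflTransGen E b a := by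
  refine ⟨fun h => ?_, fun hba h => ?_⟩
  · obtain ⟨v, hv⟩ := not_forall_not.mp h
    rcases transGen_addEdge hv with hv | ⟨hva, hbv⟩
    · exact absurd hv (hE v)
    · exact hbv.trans hva
  · exact h a (.head' (addEdge_self E a b) (ReflTransGen.mono (le_addEdge E a b) _ _ hba))

end

theorem cycle_inducing_update_general {V : Type*} (E : V → V → Prop) (i j : V)
    (hG' : Acyclic (addEdge E i j)) :
    {p : V × V | ¬ addEdge E i j p.1 p.2 ∧
        ¬ Acyclic (addEdge (addEdge E i j) p.1 p.2)}
      = {p : V × V | ¬ E p.1 p.2 ∧ ¬ Acyclic (addEdge E p.1 p.2)}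
        ∪ {p : V × V | ¬ addEdge E i j p.1 p.2 ∧
            Relation.ReflTransGen (addEdge E i j) j p.1 ∧
            Relation.ReflTransGen (addEdge E i j) p.2 i} := by
  have hG : Acyclic E := hG'.mono (le_addEdge E i j)
  have hji : ¬ ReflTransGen E j i := fun h => (not_acyclic_addEdge_iff hG).mpr h hG'
  -- `hji` is what excludes the pair `(i, j)` itself from the right-hand side.
  ext ⟨x, y⟩
  simp only [Set.mem_ofPred_eq, Set.mem_union, not_acyclic_addEdge_iff hG',
    not_acyclic_addEdge_iff hG, reflTransGen_addEdge_iff, addEdge]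
  grind

theorem cycle_inducing_update {V : Type*} (E : V → V → Prop) (i j : V)
    (hG : Acyclic E) (hij : ¬ E i j)
    (hG' : Acyclic (addEdge E i j)) :
    {p : V × V | ¬ addEdge E i j p.1 p.2 ∧
        ¬ Acyclic (addEdge (addEdge E i j) p.1 p.2)}
      = {p : V × V | ¬ E p.1 p.2 ∧ ¬ Acyclic (addEdge E p.1 p.2)}
        ∪ {p : V × V | ¬ addEdge E i j p.1 p.2 ∧
            Relation.ReflTransGen (addEdge E i j) j p.1 ∧
            Relation.ReflTransGen (addEdge E i j) p.2 i} :=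
  cycle_inducing_update_general E i j hG'
end
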